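/- arXiv:2112.01976 — 9 statements merged into one kernel-verified Lean document; each statement's English description precedes it below -/
import Mathlib

section
/- For p < q < 0, the function g_{p,q}(t) = (t^p - t^q)/(p - q) on (0,∞) attains a strict global maximum at the point τ = (p/q)^{1/(q-p)}, and τ > 1. -/
open Real

theorem stmt_0 (p q : ℝ) (hpq : p < q) (hq : q < 0) :
    1 < (p / q) ^ (1 / (q - p)) ∧
    ∀ t : ℝ, 0 < t → t ≠ (p / q) ^ (1 / (q - p)) →
      (t ^ p - t ^ q) / (p - q) <
        (((p / q) ^ (1 / (q - p))) ^ p - ((p / q) ^ (1 / (q - p))) ^ q) / (p - q) := by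
  have hp : p < 0 := hpq.trans hq
  have hpq' : p - q < 0 := sub_neg.2 hpq
  have hqp : (0:ℝ) < q - p := sub_pos.2 hpq
  have hbase : (1:ℝ) < p / q := (one_lt_div_of_neg hq).2 hpq
  have hbpos : (0:ℝ) < p / q := lt_trans one_pos hbase
  set τ := (p / q) ^ (1 / (q - p)) with hτdef
  have hτ1 : 1 < τ := (Real.one_lt_rpow_iff_of_pos hbpos).2 (Or.inl ⟨hbase, by positivity⟩)
  have hτpos : 0 < τ := lt_trans one_pos hτ1
  have hkey : τ ^ (p - q) = q / p := by
    rw [hτdef, ← Real.rpow_mul hbpos.le]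
    have : 1 / (q - p) * (p - q) = -1 := by field_simp; ring
    rw [this, Real.rpow_neg_one, inv_div]
  refine ⟨hτ1, fun t ht htne => ?_⟩
  -- derivative of f x = x^p - x^q
  have hderiv : ∀ x : ℝ, 0 < x →
      HasDerivAt (fun s : ℝ => s ^ p - s ^ q) (p * x ^ (p - 1) - q * x ^ (q - 1)) x :=
    fun x hx => (Real.hasDerivAt_rpow_const (Or.inl hx.ne')).sub
      (Real.hasDerivAt_rpow_const (Or.inl hx.ne'))
  have hfactor : ∀ x : ℝ, 0 < x →
      p * x ^ (p - 1) - q * x ^ (q - 1) = x ^ (q - 1) * (p * x ^ (p - q) - q) := by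
    intro x hx
    have : x ^ (p - 1) = x ^ (q - 1) * x ^ (p - q) := by
      rw [← Real.rpow_add hx]; ring_nf
    rw [this]; ring
  have hcont : ∀ x : ℝ, 0 < x → ContinuousAt (fun s : ℝ => s ^ p - s ^ q) x :=
    fun x hx => (hderiv x hx).continuousAt
  have hsign_neg : ∀ x : ℝ, 0 < x → x < τ → p * x ^ (p - 1) - q * x ^ (q - 1) < 0 := by
    intro x hx hxτ
    rw [hfactor x hx]
    have h1 : τ ^ (p - q) < x ^ (p - q) := Real.rpow_lt_rpow_of_neg hx hxτ hpq'
    have h2 : p * x ^ (p - q) < p * τ ^ (p - q) := by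
      exact mul_lt_mul_of_neg_left h1 hp
    rw [hkey, mul_div_cancel₀ q (ne_of_lt hp)] at h2
    have h3 : p * x ^ (p - q) - q < 0 := sub_neg.2 h2
    exact mul_neg_of_pos_of_neg (Real.rpow_pos_of_pos hx _) h3
  have hsign_pos : ∀ x : ℝ, τ < x → 0 < p * x ^ (p - 1) - q * x ^ (q - 1) := by
    intro x hxτ
    have hx : 0 < x := hτpos.trans hxτ
    rw [hfactor x hx]
    have h1 : x ^ (p - q) < τ ^ (p - q) := Real.rpow_lt_rpow_of_neg hτpos hxτ hpq'
    have h2 : p * τ ^ (p - q) < p * x ^ (p - q) := mul_lt_mul_of_neg_left h1 hp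
    rw [hkey, mul_div_cancel₀ q (ne_of_lt hp)] at h2
    exact mul_pos (Real.rpow_pos_of_pos hx _) (sub_pos.2 h2)
  have hmain : τ ^ p - τ ^ q < t ^ p - t ^ q := by
    rcases lt_or_gt_of_ne htne with h | h
    · -- t < τ : f strictly anti on [t, τ]
      have hanti : StrictAntiOn (fun s : ℝ => s ^ p - s ^ q) (Set.Icc t τ) := by
        apply strictAntiOn_of_deriv_neg (convex_Icc t τ)
        · exact fun x hx => (hcont x (lt_of_lt_of_le ht hx.1)).continuousWithinAt
        · intro x hx
          rw [interior_Icc] at hx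
          rw [(hderiv x (ht.trans hx.1)).deriv]
          exact hsign_neg x (ht.trans hx.1) hx.2
      exact hanti (Set.left_mem_Icc.2 h.le) (Set.right_mem_Icc.2 h.le) h
    · -- τ < t : f strictly mono on [τ, t]
      have hmono : StrictMonoOn (fun s : ℝ => s ^ p - s ^ q) (Set.Icc τ t) := by
        apply strictMonoOn_of_deriv_pos (convex_Icc τ t)
        · exact fun x hx => (hcont x (lt_of_lt_of_le hτpos hx.1)).continuousWithinAt
        · intro x hx
          rw [interior_Icc] at hx
          rw [(hderiv x (hτpos.trans hx.1)).deriv]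
          exact hsign_pos x hx.1
      exact hmono (Set.left_mem_Icc.2 h.le) (Set.right_mem_Icc.2 h.le) h
  exact div_lt_div_of_neg_of_lt hpq' hmain
end

section
/- Let q < p < 0 and τ = (p/q)^{1/(q-p)}. Then the restriction of g_{p,q}(t) = (t^p - t^q)/(p - q) to the interval (0, τ) is strictly increasing and concave. -/
open Real

theorem stmt_4 (p q : ℝ) (hqp : q < p) (hp : p < 0) :
    StrictMonoOn (fun t : ℝ => (t ^ p - t ^ q) / (p - q))
      (Set.Ioo 0 ((p / q) ^ (1 / (q - p)))) ∧
    ConcaveOn ℝ (Set.Ioo 0 ((p / q) ^ (1 / (q - p))))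
      (fun t : ℝ => (t ^ p - t ^ q) / (p - q)) := by
  have hq : q < 0 := hqp.trans hp
  have hpq : (0:ℝ) < p - q := by linarith
  set τ := (p / q) ^ (1 / (q - p)) with hτdef
  have hpq0 : 0 < p / q := div_pos_of_neg_of_neg hp hq
  -- key bound
  have hkey : ∀ x ∈ Set.Ioo (0:ℝ) τ, x ^ (p - q) < q / p := by
    intro x hx
    have h1 : x ^ (p - q) < τ ^ (p - q) := Real.rpow_lt_rpow hx.1.le hx.2 hpq
    have h2 : τ ^ (p - q) = q / p := by
      rw [hτdef, ← Real.rpow_mul hpq0.le,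
        show (1:ℝ) / (q - p) * (p - q) = -1 by
          rw [div_mul_eq_mul_div, one_mul, div_eq_iff (by linarith : q - p ≠ 0)]; ring,
        Real.rpow_neg_one, inv_div]
    linarith [h1, h2.symm ▸ h1]
  -- first derivative
  have hd1 : ∀ x : ℝ, 0 < x → HasDerivAt (fun t : ℝ => (t ^ p - t ^ q) / (p - q))
      ((p * x ^ (p-1) - q * x ^ (q-1)) / (p - q)) x := by
    intro x hx
    exact ((Real.hasDerivAt_rpow_const (Or.inl hx.ne')).sub
      (Real.hasDerivAt_rpow_const (Or.inl hx.ne'))).div_const _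
  -- second derivative
  have hd2 : ∀ x : ℝ, 0 < x → HasDerivAt
      (fun t : ℝ => (p * t ^ (p-1) - q * t ^ (q-1)) / (p - q))
      ((p * ((p-1) * x ^ (p-2)) - q * ((q-1) * x ^ (q-2))) / (p - q)) x := by
    intro x hx
    have h1 : HasDerivAt (fun t : ℝ => t ^ (p-1)) ((p-1) * x ^ (p-1-1)) x :=
      Real.hasDerivAt_rpow_const (Or.inl hx.ne')
    have h2 : HasDerivAt (fun t : ℝ => t ^ (q-1)) ((q-1) * x ^ (q-1-1)) x :=
      Real.hasDerivAt_rpow_const (Or.inl hx.ne')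
    rw [show p-1-1 = p-2 by ring] at h1
    rw [show q-1-1 = q-2 by ring] at h2
    exact ((h1.const_mul p).sub (h2.const_mul q)).div_const _
  -- positivity of first derivative
  have hpos : ∀ x ∈ Set.Ioo (0:ℝ) τ, 0 < (p * x ^ (p-1) - q * x ^ (q-1)) / (p - q) := by
    intro x hx
    have hx0 : (0:ℝ) < x := hx.1
    have hk := hkey x hx
    have h3 : q < p * x ^ (p - q) := by
      have := mul_lt_mul_of_neg_left hk hp
      rwa [mul_div_cancel₀ q hp.ne] at this
    have hfac : x ^ (p-1) = x ^ (q-1) * x ^ (p-q) := by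
      rw [← Real.rpow_add hx0]; ring_nf
    apply div_pos _ hpq
    rw [hfac, show p * (x ^ (q-1) * x ^ (p-q)) - q * x ^ (q-1)
        = x ^ (q-1) * (p * x ^ (p-q) - q) by ring]
    exact mul_pos (Real.rpow_pos_of_pos hx0 _) (by linarith)
  -- nonpositivity of second derivative
  have hneg : ∀ x ∈ Set.Ioo (0:ℝ) τ,
      (p * ((p-1) * x ^ (p-2)) - q * ((q-1) * x ^ (q-2))) / (p - q) ≤ 0 := by
    intro x hx
    have hx0 : (0:ℝ) < x := hx.1
    have hk := hkey x hx
    have hpp1 : 0 < p * (p - 1) := mul_pos_of_neg_of_neg hp (by linarith)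
    have h4 : p * (p-1) * x ^ (p - q) < q * (p - 1) := by
      have := mul_lt_mul_of_pos_left hk hpp1
      calc p * (p-1) * x ^ (p - q) < p * (p-1) * (q / p) := this
        _ = q * (p - 1) := by
          have hp0 : p ≠ 0 := hp.ne
          field_simp
    have h5 : q * (p - 1) < q * (q - 1) := by nlinarith
    have hfac : x ^ (p-2) = x ^ (q-2) * x ^ (p-q) := by
      rw [← Real.rpow_add hx0]; ring_nf
    apply div_nonpos_of_nonpos_of_nonneg _ hpq.le
    rw [hfac, show p * ((p-1) * (x ^ (q-2) * x ^ (p-q))) - q * ((q-1) * x ^ (q-2))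
        = x ^ (q-2) * (p * (p-1) * x ^ (p-q) - q * (q-1)) by ring]
    exact mul_nonpos_of_nonneg_of_nonpos (Real.rpow_pos_of_pos hx0 _).le (by linarith)
  have hcont : ContinuousOn (fun t : ℝ => (t ^ p - t ^ q) / (p - q)) (Set.Ioo 0 τ) :=
    fun x hx => (hd1 x hx.1).differentiableAt.continuousAt.continuousWithinAt
  have hint : interior (Set.Ioo (0:ℝ) τ) = Set.Ioo 0 τ := interior_Ioo
  constructor
  · apply strictMonoOn_of_deriv_pos (convex_Ioo _ _) hcont
    intro x hx
    rw [hint] at hx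
    rw [(hd1 x hx.1).deriv]
    exact hpos x hx
  · apply concaveOn_of_hasDerivWithinAt2_nonpos (convex_Ioo _ _) hcont
      (f' := fun x => (p * x ^ (p-1) - q * x ^ (q-1)) / (p - q))
      (f'' := fun x => (p * ((p-1) * x ^ (p-2)) - q * ((q-1) * x ^ (q-2))) / (p - q))
    · intro x hx; rw [hint] at hx
      exact (hd1 x hx.1).hasDerivWithinAt
    · intro x hx; rw [hint] at hx
      exact (hd2 x hx.1).hasDerivWithinAt
    · intro x hx; rw [hint] at hx
      exact hneg x hx
end

section
/- Let q < p < 0 and τ = (p/q)^{1/(q-p)}. Define f : (0,∞) → ℝ by f(t) = (t^p - t^q)/(p - q) for t ≤ τ and f(t) = (τ^p - τ^q)/(p - q) for t > τ. Then f is concave on (0,∞). -/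
open Real Set

theorem stmt_6 (p q : ℝ) (hqp : q < p) (hp : p < 0) :
    ConcaveOn ℝ (Set.Ioi (0 : ℝ))
      (fun t : ℝ => if t ≤ (p / q) ^ (1 / (q - p)) then (t ^ p - t ^ q) / (p - q)
        else (((p / q) ^ (1 / (q - p))) ^ p - ((p / q) ^ (1 / (q - p))) ^ q) / (p - q)) := by
  have hq : q < 0 := hqp.trans hp
  have hq0 : q ≠ 0 := hq.ne
  have hpq : 0 < p - q := by linarith
  set τ : ℝ := (p / q) ^ (1 / (q - p)) with hτdef
  have hpq0 : 0 < p / q := div_pos_iff.mpr (Or.inr ⟨hp, hq⟩)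
  have hτpos : 0 < τ := Real.rpow_pos_of_pos hpq0 _
  have hne : q - p ≠ 0 := by intro h; have := sub_eq_zero.mp h; linarith
  have hτpow : τ ^ (q - p) = p / q := by
    rw [hτdef, ← Real.rpow_mul hpq0.le, one_div, inv_mul_cancel₀ hne, Real.rpow_one]
  -- key inequality: for 0 < t ≤ τ, q * t ^ (q - p) ≤ p
  have hkey : ∀ t : ℝ, 0 < t → t ≤ τ → q * t ^ (q - p) ≤ p := by
    intro t ht htτ
    have h1 : τ ^ (q - p) ≤ t ^ (q - p) :=
      Real.rpow_le_rpow_of_nonpos ht htτ (by linarith)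
    rw [hτpow] at h1
    have h2 := mul_le_mul_of_nonpos_left h1 hq.le
    calc q * t ^ (q - p) ≤ q * (p / q) := h2
      _ = p := by field_simp
  set g1 : ℝ → ℝ := fun t => (p * t ^ (p - 1) - q * t ^ (q - 1)) / (p - q) with hg1def
  have hgd : ∀ t : ℝ, 0 < t →
      HasDerivAt (fun s : ℝ => (s ^ p - s ^ q) / (p - q)) (g1 t) t := by
    intro t ht
    exact ((Real.hasDerivAt_rpow_const (Or.inl ht.ne')).sub
      (Real.hasDerivAt_rpow_const (Or.inl ht.ne'))).div_const _
  have hsplit : ∀ t : ℝ, 0 < t → t ^ (q - 1) = t ^ (q - p) * t ^ (p - 1) := by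
    intro t ht
    rw [← Real.rpow_add ht]; ring_nf
  have hg1nonneg : ∀ t : ℝ, 0 < t → t ≤ τ → 0 ≤ g1 t := by
    intro t ht htτ
    have h1 := hkey t ht htτ
    have h2 : (0:ℝ) < t ^ (p - 1) := Real.rpow_pos_of_pos ht _
    rw [hg1def]
    have h3 : q * t ^ (q - 1) ≤ p * t ^ (p - 1) := by
      rw [hsplit t ht]
      nlinarith [h2, h1]
    apply div_nonneg _ hpq.le
    linarith
  have hg1τ : g1 τ = 0 := by
    have hnum : p * τ ^ (p - 1) - q * τ ^ (q - 1) = 0 := by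
      rw [hsplit τ hτpos, hτpow]
      field_simp
      ring
    rw [hg1def]
    simp only [hnum, zero_div]
  set g2 : ℝ → ℝ := fun t => (p * (p - 1) * t ^ (p - 2) - q * (q - 1) * t ^ (q - 2)) / (p - q)
    with hg2def
  have hg1d : ∀ t : ℝ, 0 < t → HasDerivAt g1 (g2 t) t := by
    intro t ht
    have h1 := (Real.hasDerivAt_rpow_const (x := t) (p := p - 1) (Or.inl ht.ne')).const_mul p
    have h2 := (Real.hasDerivAt_rpow_const (x := t) (p := q - 1) (Or.inl ht.ne')).const_mul q
    have h3 := (h1.sub h2).div_const (p - q)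
    have e1 : p - 1 - 1 = p - 2 := by ring
    have e2 : q - 1 - 1 = q - 2 := by ring
    rw [e1, e2] at h3
    have : g2 t = (p * ((p - 1) * t ^ (p - 2)) - q * ((q - 1) * t ^ (q - 2))) / (p - q) := by
      rw [hg2def]; ring_nf
    rw [hg1def, this]
    exact h3
  have hg2nonpos : ∀ t : ℝ, 0 < t → t ≤ τ → g2 t ≤ 0 := by
    intro t ht htτ
    have hB := hkey t ht htτ
    have hA : (0:ℝ) < t ^ (p - 2) := Real.rpow_pos_of_pos ht _
    have hsplit2 : t ^ (q - 2) = t ^ (q - p) * t ^ (p - 2) := by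
      rw [← Real.rpow_add ht]; ring_nf
    rw [hg2def]
    apply div_nonpos_of_nonpos_of_nonneg _ hpq.le
    rw [hsplit2]
    have h1 : 0 ≤ (q - 1) * (q * t ^ (q - p) - p) + p * (q - p) := by nlinarith
    nlinarith [mul_nonneg h1 hA.le]
  have hg1anti : AntitoneOn g1 (Ioc 0 τ) := by
    apply antitoneOn_of_deriv_nonpos (convex_Ioc 0 τ)
    · intro t ht; exact (hg1d t ht.1).continuousAt.continuousWithinAt
    · rw [interior_Ioc]; intro t ht
      exact (hg1d t ht.1).differentiableAt.differentiableWithinAt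
    · rw [interior_Ioc]; intro t ht
      rw [(hg1d t ht.1).deriv]; exact hg2nonpos t ht.1 ht.2.le
  set F : ℝ → ℝ := fun t => if t ≤ τ then (t ^ p - t ^ q) / (p - q)
    else (τ ^ p - τ ^ q) / (p - q) with hFdef
  set φ : ℝ → ℝ := fun t => if t ≤ τ then g1 t else 0 with hφdef
  have hFd : ∀ t : ℝ, 0 < t → HasDerivAt F (φ t) t := by
    intro t ht
    rcases lt_trichotomy t τ with hlt | heq | hgt
    · have hφt : φ t = g1 t := by rw [hφdef]; simp [hlt.le]
      rw [hφt]
      apply (hgd t ht).congr_of_eventuallyEq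
      filter_upwards [Iio_mem_nhds hlt] with s hs
      rw [hFdef]; simp [le_of_lt (mem_Iio.mp hs)]
    · have hd0 : HasDerivAt (fun s : ℝ => (s ^ p - s ^ q) / (p - q)) 0 t := by
        have h := hgd t ht
        have hz : g1 t = 0 := by rw [heq]; exact hg1τ
        rwa [hz] at h
      have hleft : HasDerivWithinAt F 0 (Iic τ) t := by
        apply hd0.hasDerivWithinAt.congr
        · intro s hs; rw [hFdef]; simp [mem_Iic.mp hs]
        · rw [hFdef]; simp [heq.le]
      have hright : HasDerivWithinAt F 0 (Ici τ) t := by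
        apply (hasDerivAt_const t ((τ ^ p - τ ^ q) / (p - q))).hasDerivWithinAt.congr
        · intro s hs
          rcases eq_or_lt_of_le (mem_Ici.mp hs) with h | h
          · rw [hFdef]; simp [← h]
          · rw [hFdef]; simp [not_le.mpr h]
        · rw [hFdef]; simp [heq.le, heq]
      have hu := hleft.union hright
      rw [Iic_union_Ici] at hu
      have hF0 : HasDerivAt F 0 t := hasDerivWithinAt_univ.mp hu
      have hφt : φ t = 0 := by rw [hφdef]; simp [heq.le, heq, hg1τ]
      rwa [hφt]
    · have hφt : φ t = 0 := by rw [hφdef]; simp [not_le.mpr hgt]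
      rw [hφt]
      apply (hasDerivAt_const t ((τ ^ p - τ ^ q) / (p - q))).congr_of_eventuallyEq
      filter_upwards [Ioi_mem_nhds hgt] with s hs
      rw [hFdef]; simp [not_le.mpr (mem_Ioi.mp hs)]
  show ConcaveOn ℝ (Set.Ioi 0) F
  apply AntitoneOn.concaveOn_of_deriv (convex_Ioi 0)
  · intro t ht; exact (hFd t ht).continuousAt.continuousWithinAt
  · rw [interior_Ioi]; intro t ht
    exact (hFd t ht).differentiableAt.differentiableWithinAt
  · rw [interior_Ioi]; intro x hx y hy hxy
    rw [(hFd x hx).deriv, (hFd y hy).deriv]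
    by_cases hyτ : y ≤ τ
    · have hxτ : x ≤ τ := hxy.trans hyτ
      rw [hφdef]; simp only [if_pos hyτ, if_pos hxτ]
      exact hg1anti ⟨hx, hxτ⟩ ⟨hy, hyτ⟩ hxy
    · rw [hφdef]; simp only [if_neg hyτ]
      by_cases hxτ : x ≤ τ
      · simp only [if_pos hxτ]; exact hg1nonneg x hx hxτ
      · simp only [if_neg hxτ]; exact le_rfl
end

section
/- Let q < p < 0 and τ = (p/q)^{1/(q-p)}, and define f by f(t) = (t^p - t^q)/(p - q) for t ≤ τ and f(t) = (τ^p - τ^q)/(p - q) for t > τ. Then for all t > 0, the sign of f(t) equals the sign of t - 1. -/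
open Real

theorem stmt_7 (p q : ℝ) (hqp : q < p) (hp : p < 0) :
    ∀ t : ℝ, 0 < t →
      ((0 < (if t ≤ (p / q) ^ (1 / (q - p)) then (t ^ p - t ^ q) / (p - q)
          else (((p / q) ^ (1 / (q - p))) ^ p - ((p / q) ^ (1 / (q - p))) ^ q) / (p - q)) ↔ 1 < t) ∧
       ((if t ≤ (p / q) ^ (1 / (q - p)) then (t ^ p - t ^ q) / (p - q)
          else (((p / q) ^ (1 / (q - p))) ^ p - ((p / q) ^ (1 / (q - p))) ^ q) / (p - q)) = 0 ↔ t = 1) ∧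
       ((if t ≤ (p / q) ^ (1 / (q - p)) then (t ^ p - t ^ q) / (p - q)
          else (((p / q) ^ (1 / (q - p))) ^ p - ((p / q) ^ (1 / (q - p))) ^ q) / (p - q)) < 0 ↔ t < 1)) := by
  have hq0 : q < 0 := hqp.trans hp
  have hpq : 0 < p - q := by linarith
  have key : ∀ x : ℝ, 0 < x →
      (0 < (x ^ p - x ^ q) / (p - q) ↔ 1 < x) ∧
      ((x ^ p - x ^ q) / (p - q) = 0 ↔ x = 1) ∧
      ((x ^ p - x ^ q) / (p - q) < 0 ↔ x < 1) := by
    intro x hx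
    have hq : 0 < x ^ q := Real.rpow_pos_of_pos hx q
    have hsum : q + (p - q) = p := by ring
    have hd : x ^ p - x ^ q = x ^ q * (x ^ (p - q) - 1) := by
      rw [mul_sub, mul_one, ← Real.rpow_add hx, hsum]
    rcases lt_trichotomy x 1 with h | h | h
    · have h1 : x ^ (p - q) < 1 := Real.rpow_lt_one hx.le h hpq
      have hneg : (x ^ p - x ^ q) / (p - q) < 0 := by
        rw [hd]
        exact div_neg_of_neg_of_pos (mul_neg_of_pos_of_neg hq (by linarith)) hpq
      refine ⟨⟨?_, ?_⟩, ⟨?_, ?_⟩, ⟨?_, ?_⟩⟩ <;> intro h' <;>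
        first | linarith | (exfalso; rw [h'] at h; linarith)
    · subst h
      have : (1:ℝ) ^ p - 1 ^ q = 0 := by rw [Real.one_rpow, Real.one_rpow]; ring
      rw [this]
      simp
    · have h1 : 1 < x ^ (p - q) :=
        (Real.one_lt_rpow_iff_of_pos hx).mpr (Or.inl ⟨h, hpq⟩)
      have hpos : 0 < (x ^ p - x ^ q) / (p - q) := by
        rw [hd]
        exact div_pos (mul_pos hq (by linarith)) hpq
      refine ⟨⟨?_, ?_⟩, ⟨?_, ?_⟩, ⟨?_, ?_⟩⟩ <;> intro h' <;>
        first | linarith | (exfalso; rw [h'] at h; linarith)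
  -- τ > 1
  have hpq01 : 0 < p / q := div_pos_of_neg_of_neg hp hq0
  have hpq1 : p / q < 1 := by
    rw [div_lt_one_of_neg hq0]
    exact hqp
  have hτ : 1 < (p / q) ^ (1 / (q - p)) :=
    (Real.one_lt_rpow_iff_of_pos hpq01).mpr (Or.inr ⟨hpq1, by
      rw [one_div_neg]; linarith⟩)
  have hτpos : (0:ℝ) < (p / q) ^ (1 / (q - p)) := by linarith
  intro t ht
  split_ifs with h
  · exact key t ht
  · have ht1 : 1 < t := hτ.trans (not_le.mp h)
    obtain ⟨k1, k2, k3⟩ := key _ hτpos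
    have hpos : 0 < (((p / q) ^ (1 / (q - p))) ^ p - ((p / q) ^ (1 / (q - p))) ^ q) / (p - q) :=
      k1.mpr hτ
    refine ⟨⟨fun _ => ht1, fun _ => hpos⟩, ⟨fun h' => absurd h' (by linarith), fun h' => by linarith⟩,
      ⟨fun h' => by linarith, fun h' => by linarith⟩⟩
end

section
/- For p < 0, the equation c^{1-p}(1 − ln c^{1-p}) = p · e^{(1-p)/p} has a unique solution c in (1, ∞). -/
open Real

theorem stmt_13 (p : ℝ) (hp : p < 0) :
    ∃! c : ℝ, 1 < c ∧
      c ^ (1 - p) * (1 - Real.log (c ^ (1 - p))) = p * Real.exp ((1 - p) / p) := by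
  have hq : (0:ℝ) < 1 - p := by linarith
  set r := p * Real.exp ((1 - p) / p) with hr
  have hr0 : r < 0 := mul_neg_of_neg_of_pos hp (Real.exp_pos _)
  set g : ℝ → ℝ := fun t => t * (1 - Real.log t) with hg
  have hderiv : ∀ t : ℝ, 0 < t → HasDerivAt g (-Real.log t) t := by
    intro t ht
    have h := (hasDerivAt_id t).mul
      ((hasDerivAt_const t (1:ℝ)).sub (Real.hasDerivAt_log ht.ne'))
    have h2 : HasDerivAt g (1 * (1 - Real.log t) + t * (0 - t⁻¹)) t := h
    convert h2 using 1
    have : t * (0 - t⁻¹) = -1 := by rw [zero_sub, mul_neg, mul_inv_cancel₀ ht.ne']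
    rw [this]; ring
  have hcont : ContinuousOn g (Set.Ici 1) := fun t ht =>
    ((hderiv t (lt_of_lt_of_le one_pos ht)).continuousAt).continuousWithinAt
  have hanti : StrictAntiOn g (Set.Ici 1) := by
    apply strictAntiOn_of_deriv_neg (convex_Ici 1) hcont
    intro t ht
    rw [interior_Ici] at ht
    rw [(hderiv t (lt_trans one_pos ht)).deriv]
    simpa using Real.log_pos ht
  have hT : (1:ℝ) < Real.exp (1 - r) := by
    have := Real.add_one_le_exp (1 - r)
    linarith
  have hgT : g (Real.exp (1 - r)) ≤ r := by
    have h1 : g (Real.exp (1 - r)) = r * Real.exp (1 - r) := by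
      simp only [hg, Real.log_exp]; ring
    rw [h1]
    nlinarith [Real.exp_pos (1 - r)]
  have hg1 : g 1 = 1 := by simp [hg]
  obtain ⟨t, ht, hgt⟩ := intermediate_value_Icc' (le_of_lt hT)
    (hcont.mono (fun x hx => hx.1))
    (⟨hgT, by rw [hg1]; linarith⟩ : r ∈ Set.Icc (g (Real.exp (1 - r))) (g 1))
  have ht1 : 1 < t := by
    rcases lt_or_eq_of_le ht.1 with h | h
    · exact h
    · exfalso; rw [← h, hg1] at hgt; linarith
  refine ⟨t ^ (1 - p)⁻¹, ⟨?_, ?_⟩, ?_⟩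
  · exact (Real.one_lt_rpow_iff_of_pos (by linarith)).mpr (Or.inl ⟨ht1, by positivity⟩)
  · rw [Real.rpow_inv_rpow (by linarith) hq.ne']
    exact hgt
  · rintro c ⟨hc1, hc2⟩
    have hct : (1:ℝ) < c ^ (1 - p) :=
      (Real.one_lt_rpow_iff_of_pos (by linarith)).mpr (Or.inl ⟨hc1, hq⟩)
    have : c ^ (1 - p) = t := hanti.injOn (le_of_lt hct) (le_of_lt ht1)
      (by show c ^ (1 - p) * (1 - Real.log (c ^ (1 - p))) = t * (1 - Real.log t); rw [hc2]; exact hgt.symm)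
    rw [← this, Real.rpow_rpow_inv (by linarith) hq.ne']
end

section
/- Let f : (0,∞) → ℝ be continuous with sign(f(t)) = sign(t−1) for all t > 0, and suppose for some real p the function t ↦ t^p f(t) is increasing on (0,∞) and strictly increasing on (0,1). Then for every x ∈ (0,1), the map t ↦ f(t)/f(t/x) is strictly increasing on the interval (x, 1). -/
open Real

theorem stmt_15 (f : ℝ → ℝ) (hf : ContinuousOn f (Set.Ioi 0))
    (hsign : ∀ t : ℝ, 0 < t → ((0 < f t ↔ 1 < t) ∧ (f t < 0 ↔ t < 1)))
    (p : ℝ)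
    (hmono : MonotoneOn (fun t : ℝ => t ^ p * f t) (Set.Ioi 0))
    (hstrict : StrictMonoOn (fun t : ℝ => t ^ p * f t) (Set.Ioo 0 1)) :
    ∀ x ∈ Set.Ioo (0 : ℝ) 1,
      StrictMonoOn (fun t : ℝ => f t / f (t / x)) (Set.Ioo x 1) := by
  rintro x ⟨hx0, hx1⟩ s ⟨hxs, hs1⟩ t ⟨hxt, ht1⟩ hst
  have hs0 : 0 < s := hx0.trans hxs
  have ht0 : 0 < t := hx0.trans hxt
  have hsx1 : 1 < s / x := (one_lt_div hx0).mpr hxs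
  have htx1 : 1 < t / x := (one_lt_div hx0).mpr hxt
  have hsx0 : 0 < s / x := lt_trans one_pos hsx1
  have htx0 : 0 < t / x := lt_trans one_pos htx1
  have hfs : f s < 0 := ((hsign s hs0).2).mpr hs1
  have hft : f t < 0 := ((hsign t ht0).2).mpr ht1
  have hfsx : 0 < f (s / x) := ((hsign _ hsx0).1).mpr hsx1
  have hftx : 0 < f (t / x) := ((hsign _ htx0).1).mpr htx1
  have hxp : 0 < x ^ p := Real.rpow_pos_of_pos hx0 p
  have hgs_lt : s ^ p * f s < t ^ p * f t := hstrict ⟨hs0, hs1⟩ ⟨ht0, ht1⟩ hst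
  have hgt_neg : t ^ p * f t < 0 :=
    mul_neg_of_pos_of_neg (Real.rpow_pos_of_pos ht0 p) hft
  have hgsx_pos : 0 < (s / x) ^ p * f (s / x) :=
    mul_pos (Real.rpow_pos_of_pos hsx0 p) hfsx
  have hgtx_pos : 0 < (t / x) ^ p * f (t / x) :=
    mul_pos (Real.rpow_pos_of_pos htx0 p) hftx
  have hgle : (s / x) ^ p * f (s / x) ≤ (t / x) ^ p * f (t / x) :=
    hmono hsx0 htx0 (by gcongr)
  have key : (s ^ p * f s) / ((s / x) ^ p * f (s / x)) <
      (t ^ p * f t) / ((t / x) ^ p * f (t / x)) := by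
    calc (s ^ p * f s) / ((s / x) ^ p * f (s / x))
        < (t ^ p * f t) / ((s / x) ^ p * f (s / x)) :=
          (div_lt_div_iff_of_pos_right hgsx_pos).mpr hgs_lt
      _ ≤ (t ^ p * f t) / ((t / x) ^ p * f (t / x)) := by
          rw [div_le_div_iff₀ hgsx_pos hgtx_pos]
          exact mul_le_mul_of_nonpos_left hgle hgt_neg.le
  have conv : ∀ u : ℝ, 0 < u → f (u / x) ≠ 0 →
      (u ^ p * f u) / ((u / x) ^ p * f (u / x)) = x ^ p * (f u / f (u / x)) := by
    intro u hu hfu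
    rw [Real.div_rpow hu.le hx0.le]
    have hup : (u : ℝ) ^ p ≠ 0 := (Real.rpow_pos_of_pos hu p).ne'
    field_simp
  rw [conv s hs0 hfsx.ne', conv t ht0 hftx.ne'] at key
  exact (mul_lt_mul_iff_right₀ hxp).mp key
end

section
/- Let f, g : (0,∞) → ℝ be continuous with sign(f(t)) = sign(g(t)) = sign(t−1) and f ≤ g pointwise. Fix n ≥ 1 and positive reals x₁,…,xₙ. Suppose y_f > 0 is the unique zero of y ↦ ∑ᵢ f(xᵢ/y) and y_g > 0 is the unique zero of y ↦ ∑ᵢ g(xᵢ/y), where both maps are continuous and have a unique positive zero. Then y_f ≤ y_g. -/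
open Real

theorem stmt_16 (f g : ℝ → ℝ)
    (hfc : ContinuousOn f (Set.Ioi 0)) (hgc : ContinuousOn g (Set.Ioi 0))
    (hfsign : ∀ t : ℝ, 0 < t → ((0 < f t ↔ 1 < t) ∧ (f t < 0 ↔ t < 1)))
    (hgsign : ∀ t : ℝ, 0 < t → ((0 < g t ↔ 1 < t) ∧ (g t < 0 ↔ t < 1)))
    (hfg : ∀ t : ℝ, 0 < t → f t ≤ g t)
    (n : ℕ) (hn : 1 ≤ n) (x : Fin n → ℝ) (hx : ∀ i, 0 < x i)
    (yf yg : ℝ) (hyf : 0 < yf) (hyg : 0 < yg)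
    (hyfz : (∑ i, f (x i / yf)) = 0)
    (hyfu : ∀ y : ℝ, 0 < y → (∑ i, f (x i / y)) = 0 → y = yf)
    (hygz : (∑ i, g (x i / yg)) = 0)
    (hygu : ∀ y : ℝ, 0 < y → (∑ i, g (x i / y)) = 0 → y = yg) :
    yf ≤ yg := by
  have hne : Nonempty (Fin n) := Fin.pos_iff_nonempty.mp hn
  set G : ℝ → ℝ := fun y => ∑ i, g (x i / y) with hG
  set Y : ℝ := max yf (∑ i, x i) + 1 with hY
  have hYyf : yf < Y := lt_of_le_of_lt (le_max_left _ _) (by linarith [le_refl (max yf (∑ i, x i))])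
  have hYpos : 0 < Y := lt_trans hyf hYyf
  -- G yf ≥ 0
  have h1 : 0 ≤ G yf := by
    rw [← hyfz]
    apply Finset.sum_le_sum
    intro i _
    exact hfg _ (div_pos (hx i) hyf)
  -- G Y < 0
  have h2 : G Y < 0 := by
    have : ∀ i ∈ Finset.univ, g (x i / Y) < 0 := by
      intro i _
      have hlt : x i < Y := by
        have : x i ≤ ∑ j, x j :=
          Finset.single_le_sum (fun j _ => (hx j).le) (Finset.mem_univ i)
        calc x i ≤ ∑ j, x j := this
        _ ≤ max yf (∑ j, x j) := le_max_right _ _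
        _ < Y := by rw [hY]; linarith
      have ht : x i / Y < 1 := (div_lt_one hYpos).mpr hlt
      exact ((hgsign _ (div_pos (hx i) hYpos)).2).mpr ht
    exact Finset.sum_neg this ⟨Classical.arbitrary _, Finset.mem_univ _⟩
  -- continuity of G on [yf, Y]
  have hGc : ContinuousOn G (Set.Icc yf Y) := by
    apply continuousOn_finset_sum
    intro i _
    exact hgc.comp
      (continuousOn_const.div continuousOn_id (fun y hy => ne_of_gt (lt_of_lt_of_le hyf hy.1)))
      (fun y hy => Set.mem_Ioi.mpr (div_pos (hx i) (lt_of_lt_of_le hyf hy.1)))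
  -- IVT
  have hsub : Set.Icc (G Y) (G yf) ⊆ G '' Set.Icc yf Y :=
    intermediate_value_Icc' hYyf.le hGc
  obtain ⟨y', hy', hGy'⟩ := hsub ⟨h2.le, h1⟩
  have hy'pos : 0 < y' := lt_of_lt_of_le hyf hy'.1
  have := hygu y' hy'pos hGy'
  linarith [hy'.1]
end

section
/- Let n ≥ 1 and x₁ ≤ … ≤ xₙ be positive reals, and let f(t) = t^{−1} − t^{−2} for t ≤ 2 and f(t) = 1/4 for t > 2. Suppose m > 0 satisfies ∑ᵢ f(xᵢ/m) = 0, and let k be the maximal index with x_k ≤ 2m. Then, with s_{−1} = ∑_{i=1}^{k} 1/xᵢ and s_{−2} = ∑_{i=1}^{k} 1/xᵢ², one has m = (s_{−1} + √(s_{−1}² + s_{−2}(n−k)))/(2 s_{−2}). -/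
open Real

theorem stmt_18 (n : ℕ) (hn : 1 ≤ n) (x : Fin n → ℝ) (hxpos : ∀ i, 0 < x i)
    (hsorted : Monotone x) (m : ℝ) (hm : 0 < m)
    (hzero : (∑ i, (if x i / m ≤ 2 then (x i / m)⁻¹ - ((x i / m) ^ 2)⁻¹ else (1 : ℝ) / 4)) = 0)
    (k : ℕ) (hk1 : 1 ≤ k) (hkn : k ≤ n)
    (hklow : ∀ i : Fin n, (i : ℕ) < k → x i ≤ 2 * m)
    (hkhigh : ∀ i : Fin n, k ≤ (i : ℕ) → 2 * m < x i) :
    m = ((∑ i ∈ Finset.univ.filter fun i : Fin n => (i : ℕ) < k, (x i)⁻¹)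
          + Real.sqrt ((∑ i ∈ Finset.univ.filter fun i : Fin n => (i : ℕ) < k, (x i)⁻¹) ^ 2
              + (∑ i ∈ Finset.univ.filter fun i : Fin n => (i : ℕ) < k, ((x i) ^ 2)⁻¹) * ((n : ℝ) - k)))
        / (2 * (∑ i ∈ Finset.univ.filter fun i : Fin n => (i : ℕ) < k, ((x i) ^ 2)⁻¹)) := by
  set A : Finset (Fin n) := Finset.univ.filter fun i : Fin n => (i : ℕ) < k with hA
  set s1 : ℝ := ∑ i ∈ A, (x i)⁻¹ with hs1
  set s2 : ℝ := ∑ i ∈ A, ((x i) ^ 2)⁻¹ with hs2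
  -- cardinalities
  have hcardA : A.card = k := by
    rw [hA, show (Finset.univ.filter fun i : Fin n => (i:ℕ) < k) = Finset.univ.map (Fin.castLEEmb hkn) by
      ext i; simp [Fin.castLEEmb]
      constructor
      · intro hi; exact ⟨⟨i, hi⟩, rfl⟩
      · rintro ⟨j, rfl⟩; exact j.2]
    simp
  have hcardAc : (Finset.univ.filter fun i : Fin n => ¬ (i:ℕ) < k).card = n - k := by
    have := Finset.card_filter_add_card_filter_not (s := (Finset.univ : Finset (Fin n)))
      (p := fun i : Fin n => (i:ℕ) < k)
    rw [← hA, hcardA, Finset.card_univ, Fintype.card_fin] at this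
    omega
  -- positivity of sums
  have hs2pos : 0 < s2 := by
    rw [hs2]
    apply Finset.sum_pos
    · intro i hi
      exact inv_pos.2 (pow_pos (hxpos i) 2)
    · rw [← Finset.card_pos, hcardA]; exact hk1
  have hs1pos : 0 < s1 := by
    rw [hs1]
    apply Finset.sum_pos
    · intro i hi
      exact inv_pos.2 (hxpos i)
    · rw [← Finset.card_pos, hcardA]; exact hk1
  -- rewrite the zero-sum equation
  have hsum : m * s1 - m ^ 2 * s2 + ((n : ℝ) - k) / 4 = 0 := by
    have hsplit := Finset.sum_filter_add_sum_filter_not Finset.univ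
      (fun i : Fin n => (i:ℕ) < k)
      (fun i => (if x i / m ≤ 2 then (x i / m)⁻¹ - ((x i / m) ^ 2)⁻¹ else (1 : ℝ) / 4))
    rw [← hsplit] at hzero
    have h1 : ∑ i ∈ A, (if x i / m ≤ 2 then (x i / m)⁻¹ - ((x i / m) ^ 2)⁻¹ else (1 : ℝ) / 4)
        = m * s1 - m ^ 2 * s2 := by
      rw [hs1, hs2, Finset.mul_sum, Finset.mul_sum, ← Finset.sum_sub_distrib]
      apply Finset.sum_congr rfl
      intro i hi
      have hik : (i : ℕ) < k := by simpa [hA] using hi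
      have hle : x i / m ≤ 2 := (div_le_iff₀ hm).2 (by linarith [hklow i hik])
      rw [if_pos hle]
      have hxi := (hxpos i).ne'
      field_simp
    have h2 : ∑ i ∈ Finset.univ.filter (fun i : Fin n => ¬ (i:ℕ) < k),
        (if x i / m ≤ 2 then (x i / m)⁻¹ - ((x i / m) ^ 2)⁻¹ else (1 : ℝ) / 4)
        = ((n : ℝ) - k) / 4 := by
      have hall : ∀ i ∈ Finset.univ.filter (fun i : Fin n => ¬ (i:ℕ) < k),
          (if x i / m ≤ 2 then (x i / m)⁻¹ - ((x i / m) ^ 2)⁻¹ else (1 : ℝ) / 4) = (1:ℝ)/4 := by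
        intro i hi
        have hik : k ≤ (i : ℕ) := by
          simp only [Finset.mem_filter, not_lt] at hi; exact hi.2
        have hgt : ¬ x i / m ≤ 2 := by
          rw [not_le, lt_div_iff₀ hm]
          linarith [hkhigh i hik]
        rw [if_neg hgt]
      rw [Finset.sum_congr rfl hall, Finset.sum_const, hcardAc, nsmul_eq_mul, Nat.cast_sub hkn]
      ring
    rw [h1, h2] at hzero
    linarith
  -- the key square identity
  have hnk : (0:ℝ) ≤ (n : ℝ) - k := by
    have : (k:ℝ) ≤ n := by exact_mod_cast hkn
    linarith
  have hkey : s1 ^ 2 + s2 * ((n : ℝ) - k) = (2 * s2 * m - s1) ^ 2 := by nlinarith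
  have hpos : 0 ≤ 2 * s2 * m - s1 := by nlinarith
  have hsqrt : Real.sqrt (s1 ^ 2 + s2 * ((n : ℝ) - k)) = 2 * s2 * m - s1 := by
    rw [hkey, Real.sqrt_sq hpos]
  rw [hsqrt]
  field_simp
  ring
end

section
/- For real parameters with min(p,q) ≤ 0 ≤ max(p,q) < 1 and p ≠ q, the Gini mean 𝒢_{p,q}(x₁,…,xₙ) = ((x₁^p + … + xₙ^p)/(x₁^q + … + xₙ^q))^{1/(p−q)} satisfies lim_{n→∞} n · 𝒢_{p,q}(1, 1/2, …, 1/n) = ((1−p)/(1−q))^{1/(q−p)}. -/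
open Real Filter

lemma aux_sum_rpow_tendsto (r : ℝ) (hr : r < 1) :
    Tendsto (fun n : ℕ => (∑ k ∈ Finset.Icc 1 n, ((k : ℝ)⁻¹) ^ r) / (n : ℝ) ^ (1 - r))
      atTop (nhds (1 / (1 - r))) := by
  set s : ℝ := 1 - r with hs_def
  have hs : 0 < s := by rw [hs_def]; linarith
  set g : ℕ → ℝ := fun k => ((k : ℝ) + 1) ^ s - (k : ℝ) ^ s with hg_def
  set f : ℕ → ℝ := fun k => s * ((k : ℝ) + 1) ^ (-r) with hf_def
  have hgpos : ∀ k, 0 < g k := fun k =>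
    sub_pos.2 (Real.rpow_lt_rpow (Nat.cast_nonneg k) (by linarith) hs)
  -- derivative of t ↦ (1-t)^s at 0 is -s
  have hderiv : HasDerivAt (fun t : ℝ => (1 - t) ^ s) (-s) 0 := by
    have h1 : HasDerivAt (fun t : ℝ => 1 - t) (-1) 0 := (hasDerivAt_id 0).const_sub 1
    have h2 := (Real.hasDerivAt_rpow_const (p := s) (x := (1:ℝ) - 0)
      (Or.inl (by norm_num))).comp 0 h1
    have : s * ((1:ℝ) - 0) ^ (s - 1) * (-1) = -s := by
      norm_num
    rw [this] at h2
    exact h2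
  have hslope : Tendsto (fun t : ℝ => (1 - (1 - t) ^ s) / t) (nhdsWithin 0 {(0:ℝ)}ᶜ)
      (nhds s) := by
    have h3 := hasDerivAt_iff_tendsto_slope.1 hderiv
    have h4 : Tendsto (fun t : ℝ => (((1 - t) ^ s - 1) / t)) (nhdsWithin 0 {(0:ℝ)}ᶜ)
        (nhds (-s)) := by
      refine h3.congr fun t => ?_
      rw [slope_def_field]
      norm_num [div_eq_div_iff]
    have h5 := h4.neg
    rw [neg_neg] at h5
    refine h5.congr fun t => ?_
    rw [← neg_div, neg_sub]
  have htk : Tendsto (fun k : ℕ => ((k : ℝ) + 1)⁻¹) atTop (nhdsWithin 0 {(0:ℝ)}ᶜ) := by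
    apply tendsto_nhdsWithin_of_tendsto_nhds_of_eventually_within
    · have := tendsto_one_div_add_atTop_nhds_zero_nat (𝕜 := ℝ)
      simpa [one_div] using this
    · filter_upwards with k
      have : (0:ℝ) < ((k:ℝ)+1)⁻¹ := by positivity
      simpa using this.ne'
  have hψ : Tendsto (fun k : ℕ => (1 - (1 - ((k:ℝ)+1)⁻¹) ^ s) / ((k:ℝ)+1)⁻¹)
      atTop (nhds s) := hslope.comp htk
  have hratio : Tendsto (fun k : ℕ => f k / g k) atTop (nhds 1) := by
    have h6 := (tendsto_const_nhds (x := s) (f := atTop (α := ℕ))).div hψ hs.ne'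
    rw [div_self hs.ne'] at h6
    refine h6.congr fun k => ?_
    have hK : (0:ℝ) < (k:ℝ) + 1 := by positivity
    have hKs : (0:ℝ) < ((k:ℝ)+1) ^ s := Real.rpow_pos_of_pos hK _
    have h1t : 1 - ((k:ℝ)+1)⁻¹ = (k:ℝ) / ((k:ℝ)+1) := by field_simp; ring
    have hA : 1 - (1 - ((k:ℝ)+1)⁻¹) ^ s = g k / ((k:ℝ)+1) ^ s := by
      rw [h1t, Real.div_rpow (Nat.cast_nonneg k) hK.le, hg_def]
      field_simp
    have hfr : ((k:ℝ)+1) ^ (-r) = ((k:ℝ)+1) ^ s / ((k:ℝ)+1) := by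
      rw [show (-r) = s - 1 by rw [hs_def]; ring, Real.rpow_sub hK, Real.rpow_one]
    simp only [Pi.div_apply]
    rw [hA, hf_def]
    simp only []
    rw [hfr]
    have hgk := (hgpos k).ne'
    field_simp
  have hsub : (fun k : ℕ => f k - g k) =o[atTop] g := by
    rw [Asymptotics.isLittleO_iff_tendsto (fun k h => absurd h (hgpos k).ne')]
    have h7 : Tendsto (fun k : ℕ => f k / g k - 1) atTop (nhds 0) := by
      simpa using hratio.sub (tendsto_const_nhds (x := (1:ℝ)))
    refine h7.congr fun k => ?_
    rw [sub_div, div_self (hgpos k).ne']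
  have hgsum : ∀ n : ℕ, ∑ i ∈ Finset.range n, g i = (n : ℝ) ^ s := by
    intro n
    calc ∑ i ∈ Finset.range n, g i
        = ∑ i ∈ Finset.range n, ((((i+1 : ℕ)) : ℝ) ^ s - ((i : ℕ) : ℝ) ^ s) := by
          refine Finset.sum_congr rfl fun i _ => ?_
          rw [hg_def]; push_cast; ring_nf
      _ = ((n : ℕ) : ℝ) ^ s - ((0 : ℕ) : ℝ) ^ s :=
          Finset.sum_range_sub (fun k : ℕ => ((k : ℕ) : ℝ) ^ s) n
      _ = (n : ℝ) ^ s := by simp [Real.zero_rpow hs.ne']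
  have hgtop : Tendsto (fun n : ℕ => ∑ i ∈ Finset.range n, g i) atTop atTop := by
    have := (tendsto_rpow_atTop hs).comp (tendsto_natCast_atTop_atTop (R := ℝ))
    exact this.congr fun n => (hgsum n).symm
  have hsum : (fun n : ℕ => (∑ i ∈ Finset.range n, f i) - (n:ℝ)^s)
      =o[atTop] (fun n : ℕ => (n:ℝ)^s) := by
    have h8 := hsub.sum_range (fun k => (hgpos k).le) hgtop
    refine h8.congr' ?_ ?_
    · filter_upwards with n
      rw [Finset.sum_sub_distrib, hgsum n]
    · filter_upwards with n
      rw [hgsum n]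
  have hns : ∀ᶠ n : ℕ in atTop, ((n:ℝ)^s) ≠ 0 := by
    filter_upwards [Filter.eventually_gt_atTop 0] with n hn
    exact (Real.rpow_pos_of_pos (by exact_mod_cast hn) s).ne'
  have h5 : Tendsto (fun n : ℕ => (∑ i ∈ Finset.range n, f i) / (n:ℝ)^s) atTop (nhds 1) := by
    have h9 := (Asymptotics.isLittleO_iff_tendsto'
      (by filter_upwards [hns] with n h h2; exact absurd h2 h)).1 hsum
    have h10 := h9.add (tendsto_const_nhds (x := (1:ℝ)) (f := atTop (α := ℕ)))
    rw [zero_add] at h10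
    refine h10.congr' ?_
    filter_upwards [hns] with n hn
    field_simp
    ring
  have hfsum : ∀ n : ℕ, ∑ i ∈ Finset.range n, f i
      = s * ∑ k ∈ Finset.Icc 1 n, ((k:ℝ)⁻¹) ^ r := by
    intro n
    rw [Finset.mul_sum, ← Finset.Ico_add_one_right_eq_Icc, Finset.sum_Ico_eq_sum_range]
    try simp only [Nat.add_sub_cancel]
    refine Finset.sum_congr rfl fun i _ => ?_
    rw [hf_def]
    have hK : (0:ℝ) ≤ ((1 + i : ℕ) : ℝ) := Nat.cast_nonneg _
    rw [Real.inv_rpow hK, ← Real.rpow_neg hK]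
    push_cast
    ring_nf
  have h11 := h5.mul (tendsto_const_nhds (x := s⁻¹) (f := atTop (α := ℕ)))
  rw [one_mul] at h11
  have h12 : Tendsto (fun n : ℕ => (∑ k ∈ Finset.Icc 1 n, ((k:ℝ)⁻¹) ^ r) / (n:ℝ)^s)
      atTop (nhds s⁻¹) := by
    refine h11.congr fun n => ?_
    rw [hfsum n]
    by_cases hzero : ((n:ℝ)^s) = 0
    · rw [hzero]; simp
    · field_simp
  rw [one_div]
  exact h12

theorem stmt_19 (p q : ℝ) (hpq : p ≠ q) (hmin : min p q ≤ 0) (hmax0 : 0 ≤ max p q)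
    (hmax1 : max p q < 1) :
    Tendsto (fun n : ℕ => (n : ℝ) *
        ((∑ k ∈ Finset.Icc 1 n, ((k : ℝ)⁻¹) ^ p) / (∑ k ∈ Finset.Icc 1 n, ((k : ℝ)⁻¹) ^ q))
          ^ (1 / (p - q)))
      atTop (nhds (((1 - p) / (1 - q)) ^ (1 / (q - p)))) := by
  have hp1 : p < 1 := lt_of_le_of_lt (le_max_left p q) hmax1
  have hq1 : q < 1 := lt_of_le_of_lt (le_max_right p q) hmax1
  have h1p : (0:ℝ) < 1 - p := by linarith
  have h1q : (0:ℝ) < 1 - q := by linarith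
  have hpq' : p - q ≠ 0 := sub_ne_zero.2 hpq
  have hp := aux_sum_rpow_tendsto p hp1
  have hq := aux_sum_rpow_tendsto q hq1
  have hdenom : (1 / (1 - q) : ℝ) ≠ 0 := by positivity
  have hdiv := hp.div hq hdenom
  have hbase : (0:ℝ) < (1 / (1 - p)) / (1 / (1 - q)) := by positivity
  have h2 := hdiv.rpow_const (p := 1 / (p - q)) (Or.inl hbase.ne')
  have hval : ((1 / (1 - p)) / (1 / (1 - q))) ^ (1 / (p - q))
      = ((1 - p) / (1 - q)) ^ (1 / (q - p)) := by
    have e1 : (1 / (1 - p)) / (1 / (1 - q)) = ((1 - p) / (1 - q))⁻¹ := by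
      field_simp
    have e2 : -(1 / (p - q)) = 1 / (q - p) := by
      rw [show q - p = -(p - q) by ring, div_neg]
    rw [e1, Real.inv_rpow (by positivity), ← Real.rpow_neg (by positivity), e2]
  rw [hval] at h2
  refine h2.congr' ?_
  filter_upwards [eventually_ge_atTop 1] with n hn
  simp only [Pi.div_apply]
  set Sp := ∑ k ∈ Finset.Icc 1 n, ((k:ℝ)⁻¹) ^ p with hSp_def
  set Sq := ∑ k ∈ Finset.Icc 1 n, ((k:ℝ)⁻¹) ^ q with hSq_def
  have hSp : 0 < Sp := by
    refine Finset.sum_pos (fun k hk => ?_) ⟨1, Finset.mem_Icc.2 ⟨le_refl 1, hn⟩⟩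
    have hk1 : 1 ≤ k := (Finset.mem_Icc.1 hk).1
    have : (0:ℝ) < (k:ℝ) := by exact_mod_cast Nat.lt_of_lt_of_le Nat.zero_lt_one hk1
    positivity
  have hSq : 0 < Sq := by
    refine Finset.sum_pos (fun k hk => ?_) ⟨1, Finset.mem_Icc.2 ⟨le_refl 1, hn⟩⟩
    have hk1 : 1 ≤ k := (Finset.mem_Icc.1 hk).1
    have : (0:ℝ) < (k:ℝ) := by exact_mod_cast Nat.lt_of_lt_of_le Nat.zero_lt_one hk1
    positivity
  have hN : (0:ℝ) < (n:ℝ) := by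
    exact_mod_cast Nat.lt_of_lt_of_le Nat.zero_lt_one hn
  have hb : (Sp / (n:ℝ)^(1-p)) / (Sq / (n:ℝ)^(1-q)) = (Sp/Sq) * (n:ℝ)^(p-q) := by
    rw [div_div_div_comm, ← Real.rpow_sub hN, show (1-p)-(1-q) = -(p-q) by ring,
      Real.rpow_neg hN.le, div_eq_mul_inv (Sp / Sq), inv_inv]
  calc ((Sp / (n:ℝ)^(1-p)) / (Sq / (n:ℝ)^(1-q))) ^ (1/(p-q))
      = ((Sp/Sq) * (n:ℝ)^(p-q)) ^ (1/(p-q)) := by rw [hb]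
    _ = (Sp/Sq) ^ (1/(p-q)) * ((n:ℝ)^(p-q)) ^ (1/(p-q)) :=
        Real.mul_rpow (by positivity) (by positivity)
    _ = (n:ℝ) * (Sp/Sq) ^ (1/(p-q)) := by
        rw [← Real.rpow_mul hN.le, mul_one_div_cancel hpq', Real.rpow_one, mul_comm]
end
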